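/- Let Φ be an irreducible root system with extended basis Δ'. Define a partial order on Φ by: α ≤ β if and only if in the affine root system Φ_aff = Φ × ℤ with basis Δ_aff, one has (α, v+ε_α) ≤ (β, v+ε_β) coefficientwise for every integer v, where ε_γ = 0 if γ > 0 and ε_γ = 1 if γ < 0 relative to Δ. Then for α, β ∈ Φ: α ≤ β if and only if there exist elements γ_1, …, γ_t of Δ' such that for every i ∈ {1,…,t}, α_i = α + γ_1 + ⋯ + γ_i is a root of Φ, and α_t = β. -/

import Mathlib

open Finset

/-- A based, irreducible, reduced root system in a Euclidean space, together with
coordinate data with respect to the base `Δ`, the highest root, and the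
extended base `Δ' = Δ ∪ {-highest}`. -/
structure BasedRootSystem (V : Type*) [NormedAddCommGroup V] [InnerProductSpace ℝ V] where
  Φ : Finset V
  zero_not_mem : (0 : V) ∉ Φ
  neg_mem : ∀ α ∈ Φ, -α ∈ Φ
  reduced : ∀ α ∈ Φ, ∀ c : ℝ, c • α ∈ Φ → c = 1 ∨ c = -1
  crystallographic : ∀ α ∈ Φ, ∀ β ∈ Φ, ∃ n : ℤ,
    2 * (inner ℝ α β : ℝ) / (inner ℝ α α : ℝ) = (n : ℝ)
  reflect_mem : ∀ α ∈ Φ, ∀ β ∈ Φ, β - (2 * (inner ℝ β α : ℝ) / (inner ℝ α α : ℝ)) • α ∈ Φ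
  Δ : Finset V
  base_sub : Δ ⊆ Φ
  indep : LinearIndependent ℝ (fun γ : Δ => (γ : V))
  coord : V → V → ℤ
  coord_zero : ∀ γ : V, coord 0 γ = 0
  coord_spec : ∀ α ∈ Φ, α = ∑ γ ∈ Δ, (coord α γ : ℝ) • γ
  coord_sign : ∀ α ∈ Φ, (∀ γ ∈ Δ, 0 ≤ coord α γ) ∨ (∀ γ ∈ Δ, coord α γ ≤ 0)
  highest : V
  highest_mem : highest ∈ Φ
  highest_pos : ∀ γ ∈ Δ, 1 ≤ coord highest γ
  highest_is_highest : ∀ α ∈ Φ, ∀ γ ∈ Δ, coord α γ ≤ coord highest γ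

namespace BasedRootSystem

variable {V : Type*} [NormedAddCommGroup V] [InnerProductSpace ℝ V] (B : BasedRootSystem V)

/-- `α` is positive relative to the base `Δ`. -/
def IsPos (α : V) : Prop := ∀ γ ∈ B.Δ, 0 ≤ B.coord α γ

/-- `ε_α` : `0` if `α` is positive, `1` otherwise. -/
noncomputable def eps (α : V) : ℤ := by
  classical exact if B.IsPos α then 0 else 1

/-- The extended base `Δ' = Δ ∪ {-α_M}`. -/
noncomputable def extBase : Finset V := by
  classical exact insert (-B.highest) B.Δ

/-- The Coxeter number: one plus the height of the highest root. -/
def cox : ℤ := (∑ γ ∈ B.Δ, B.coord B.highest γ) + 1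

/-- Coefficientwise order on affine roots `(α, n)`, via their decomposition in the
affine basis `Δ_aff`. -/
def affLe (p q : V × ℤ) : Prop :=
  p.2 ≤ q.2 ∧ ∀ γ ∈ B.Δ,
    B.coord p.1 γ + p.2 * B.coord B.highest γ ≤ B.coord q.1 γ + q.2 * B.coord B.highest γ

/-- The partial order on `Φ` induced from the affine root system:
`α ≤ β` iff `(α, v + ε_α) ≤ (β, v + ε_β)` coefficientwise for every `v`. -/
def rle (α β : V) : Prop := B.affLe (α, B.eps α) (β, B.eps β)

/-- `c` is a decomposition of `α` as a nonnegative integral combination of the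
extended base `Δ'`. -/
def IsDecomp (α : V) (c : V → ℕ) : Prop :=
  α = ∑ γ ∈ B.extBase, (c γ : ℝ) • γ

/-- The sum of the coefficients of a decomposition in `Δ'`. -/
noncomputable def decompSum (c : V → ℕ) : ℤ := ∑ γ ∈ B.extBase, (c γ : ℤ)

/-- A subset of `Φ` is `Δ'`-complete if it is downward closed for the order `rle`. -/
def Complete (Ψ : Set V) : Prop :=
  ∀ α ∈ Ψ, ∀ β ∈ B.Φ, B.rle β α → β ∈ Ψ

/-- The set of ratios `(Σ ε_{α_i})/t` over nonempty zero-sum families in `X`. -/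
noncomputable def ratioSet (X : Set V) : Set ℝ :=
  {q | ∃ (t : ℕ) (a : Fin t → V), 0 < t ∧ (∀ i, a i ∈ X) ∧ (∑ i, a i) = 0 ∧
        q = (∑ i, (B.eps (a i) : ℝ)) / (t : ℝ)}

end BasedRootSystem

/-!
Write a root `ζ` as the affine root `(ζ, ε_ζ)` in the basis `Δ_aff`. Then `α ≤ β` compares
coefficients, and the affine height of `ζ` (the sum of its coefficients) lies in `[1, h - 1]`,
`h` the Coxeter number. That bound forces `ε_{ζ+s} = ε_ζ + ε_s` whenever `ζ, ζ + s ∈ Φ` and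
`s ∈ Δ'`, so adding `s` raises exactly the `s`-coefficient by one, which gives one direction.
Conversely, if `α < β` then `0 < ‖β - α‖² = ∑ₛ (β - α)ₛ ⟪β - α, s⟫` yields `s ∈ Δ'` occurring in
`β - α` with `⟪α, s⟫ < 0` or `⟪β, s⟫ > 0`; then `α + s` or `β - s` is a root between `α` and `β`,
and we conclude by induction on the difference of affine heights.
-/

theorem Relation.reflTransGen_iff_exists_partial_sums {G : Type*} [AddCommGroup G]
    {S P : Set G} {a b : G} (ha : a ∈ P) :
    Relation.ReflTransGen (fun x y => y ∈ P ∧ y - x ∈ S) a b ↔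
      ∃ (t : ℕ) (g : ℕ → G), (∀ i < t, g i ∈ S) ∧ (∀ i ≤ t, a + ∑ j ∈ range i, g j ∈ P) ∧
        a + ∑ j ∈ range t, g j = b := by
  constructor
  · intro h
    induction h with
    | refl => exact ⟨0, 0, by simp, fun i hi => by simpa [Nat.le_zero.mp hi], by simp⟩
    | @tail b c _ hbc ih =>
      obtain ⟨t, g, hS, hP, rfl⟩ := ih
      have hsum : ∀ i ≤ t, ∑ j ∈ range i, Function.update g t (c - (a + ∑ j ∈ range t, g j)) j
          = ∑ j ∈ range i, g j := fun i hi =>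
        sum_congr rfl fun j hj => Function.update_of_ne (by simp at hj; omega) _ _
      refine ⟨t + 1, Function.update g t (c - (a + ∑ j ∈ range t, g j)), fun i hi => ?_,
        fun i hi => ?_, ?_⟩
      · rcases eq_or_ne i t with rfl | hit
        · simpa using hbc.2
        · simpa [Function.update_of_ne hit] using hS i (by omega)
      · rcases Nat.le_succ_iff.mp hi with hi | rfl
        · simpa [hsum i hi] using hP i hi
        · rw [sum_range_succ, hsum t le_rfl, Function.update_self, ← add_assoc, add_sub_cancel]
          exact hbc.1
      · rw [sum_range_succ, hsum t le_rfl, Function.update_self, ← add_assoc, add_sub_cancel]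
  · rintro ⟨t, g, hS, hP, rfl⟩
    induction t with
    | zero => simpa using Relation.ReflTransGen.refl
    | succ t ih =>
      refine (ih (fun i hi => hS i (by omega)) (fun i hi => hP i (by omega))).tail
        ⟨hP (t + 1) le_rfl, ?_⟩
      simpa [sum_range_succ] using hS t (by omega)

namespace BasedRootSystem

variable {V : Type*} [NormedAddCommGroup V] [InnerProductSpace ℝ V] (B : BasedRootSystem V)

open scoped Classical

lemma coord_eq_of_eq_sum {ζ : V} (hζ : ζ ∈ B.Φ) {m : V → ℤ}
    (h : ζ = ∑ γ ∈ B.Δ, (m γ : ℝ) • γ) : ∀ γ ∈ B.Δ, B.coord ζ γ = m γ := by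
  have hsum : ∑ γ : B.Δ, ((B.coord ζ γ : ℝ) - m γ) • (γ : V) = 0 := by
    rw [sum_coe_sort B.Δ fun γ => ((B.coord ζ γ : ℝ) - m γ) • γ]
    simp only [sub_smul, sum_sub_distrib, ← B.coord_spec ζ hζ, ← h, sub_self]
  intro γ hγ
  exact_mod_cast sub_eq_zero.mp (Fintype.linearIndependent_iff.mp B.indep _ hsum ⟨γ, hγ⟩)

lemma coord_add {ζ ξ : V} (hζ : ζ ∈ B.Φ) (hξ : ξ ∈ B.Φ) (hζξ : ζ + ξ ∈ B.Φ) :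
    ∀ γ ∈ B.Δ, B.coord (ζ + ξ) γ = B.coord ζ γ + B.coord ξ γ := by
  refine B.coord_eq_of_eq_sum hζξ ?_
  conv_lhs => rw [B.coord_spec ζ hζ, B.coord_spec ξ hξ]
  simp only [Int.cast_add, add_smul, sum_add_distrib]

lemma coord_neg {ζ : V} (hζ : ζ ∈ B.Φ) : ∀ γ ∈ B.Δ, B.coord (-ζ) γ = -B.coord ζ γ := by
  refine B.coord_eq_of_eq_sum (B.neg_mem ζ hζ) ?_
  conv_lhs => rw [B.coord_spec ζ hζ]
  simp only [Int.cast_neg, neg_smul, sum_neg_distrib]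

lemma coord_of_mem_base {δ : V} (hδ : δ ∈ B.Δ) :
    ∀ γ ∈ B.Δ, B.coord δ γ = if γ = δ then 1 else 0 := by
  refine B.coord_eq_of_eq_sum (B.base_sub hδ) ?_
  simp [ite_smul, hδ]

lemma exists_coord_ne_zero {ζ : V} (hζ : ζ ∈ B.Φ) : ∃ γ ∈ B.Δ, B.coord ζ γ ≠ 0 := by
  by_contra! h
  refine B.zero_not_mem ?_
  rwa [B.coord_spec ζ hζ, sum_eq_zero fun γ hγ => by simp [h γ hγ]] at hζ

lemma isPos_of_mem_base {δ : V} (hδ : δ ∈ B.Δ) : B.IsPos δ := fun γ hγ => by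
  rw [B.coord_of_mem_base hδ γ hγ]
  split_ifs <;> simp

lemma isPos_neg_of_not_isPos {ζ : V} (hζ : ζ ∈ B.Φ) (h : ¬B.IsPos ζ) : B.IsPos (-ζ) :=
  fun γ hγ => by
    rw [B.coord_neg hζ γ hγ, neg_nonneg]
    exact (B.coord_sign ζ hζ).resolve_left h γ hγ

lemma not_isPos_neg_of_isPos {ζ : V} (hζ : ζ ∈ B.Φ) (h : B.IsPos ζ) : ¬B.IsPos (-ζ) := by
  obtain ⟨γ, hγ, hne⟩ := B.exists_coord_ne_zero hζ
  intro hneg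
  have := hneg γ hγ
  rw [B.coord_neg hζ γ hγ] at this
  exact hne (le_antisymm (by omega) (h γ hγ))

lemma eps_of_isPos {ζ : V} (h : B.IsPos ζ) : B.eps ζ = 0 := by
  simp [eps, h]

lemma eps_of_not_isPos {ζ : V} (h : ¬B.IsPos ζ) : B.eps ζ = 1 := by
  simp [eps, h]

lemma eps_eq_zero_or_eq_one (ζ : V) : B.eps ζ = 0 ∨ B.eps ζ = 1 := by
  by_cases h : B.IsPos ζ
  · exact .inl (B.eps_of_isPos h)
  · exact .inr (B.eps_of_not_isPos h)

lemma eps_neg {ζ : V} (hζ : ζ ∈ B.Φ) : B.eps (-ζ) = 1 - B.eps ζ := by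
  by_cases h : B.IsPos ζ
  · rw [B.eps_of_isPos h, B.eps_of_not_isPos (B.not_isPos_neg_of_isPos hζ h)]; rfl
  · rw [B.eps_of_not_isPos h, B.eps_of_isPos (B.isPos_neg_of_not_isPos hζ h)]; rfl

lemma isPos_highest : B.IsPos B.highest := fun γ hγ => zero_le_one.trans (B.highest_pos γ hγ)

lemma neg_highest_not_mem_base : -B.highest ∉ B.Δ := fun h =>
  B.not_isPos_neg_of_isPos B.highest_mem B.isPos_highest (B.isPos_of_mem_base h)

lemma mem_extBase_iff {s : V} : s ∈ B.extBase ↔ s = -B.highest ∨ s ∈ B.Δ := by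
  simp [extBase]

lemma mem_of_mem_extBase {s : V} (hs : s ∈ B.extBase) : s ∈ B.Φ := by
  rcases B.mem_extBase_iff.mp hs with rfl | hs
  · exact B.neg_mem _ B.highest_mem
  · exact B.base_sub hs

lemma sum_extBase {M : Type*} [AddCommMonoid M] (f : V → M) :
    ∑ s ∈ B.extBase, f s = f (-B.highest) + ∑ γ ∈ B.Δ, f γ := by
  rw [show B.extBase = insert (-B.highest) B.Δ by simp [extBase]]
  exact sum_insert B.neg_highest_not_mem_base

def height (ζ : V) : ℤ := ∑ γ ∈ B.Δ, B.coord ζ γ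

/-- The height of the affine root `(ζ, ε_ζ)`, i.e. the sum of its coefficients in `Δ_aff`. -/
noncomputable def affHeight (ζ : V) : ℤ := B.height ζ + B.eps ζ * B.cox

lemma height_add {ζ ξ : V} (hζ : ζ ∈ B.Φ) (hξ : ξ ∈ B.Φ) (hζξ : ζ + ξ ∈ B.Φ) :
    B.height (ζ + ξ) = B.height ζ + B.height ξ := by
  rw [height, sum_congr rfl (B.coord_add hζ hξ hζξ), sum_add_distrib]; rfl

lemma height_neg {ζ : V} (hζ : ζ ∈ B.Φ) : B.height (-ζ) = -B.height ζ := by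
  rw [height, sum_congr rfl (B.coord_neg hζ), sum_neg_distrib]; rfl

lemma height_highest : B.height B.highest = B.cox - 1 := by
  rw [cox, height]; ring

lemma height_le {ζ : V} (hζ : ζ ∈ B.Φ) : B.height ζ ≤ B.cox - 1 :=
  B.height_highest ▸ sum_le_sum (B.highest_is_highest ζ hζ)

lemma one_le_height {ζ : V} (hζ : ζ ∈ B.Φ) (h : B.IsPos ζ) : 1 ≤ B.height ζ := by
  obtain ⟨γ, hγ, hne⟩ := B.exists_coord_ne_zero hζ
  calc 1 ≤ B.coord ζ γ := by have := h γ hγ; omega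
    _ ≤ B.height ζ := single_le_sum (fun γ hγ => h γ hγ) hγ

lemma affHeight_of_isPos {ζ : V} (h : B.IsPos ζ) : B.affHeight ζ = B.height ζ := by
  simp [affHeight, B.eps_of_isPos h]

lemma affHeight_neg {ζ : V} (hζ : ζ ∈ B.Φ) : B.affHeight (-ζ) = B.cox - B.affHeight ζ := by
  rw [affHeight, affHeight, B.height_neg hζ, B.eps_neg hζ]; ring

lemma affHeight_mem_Icc {ζ : V} (hζ : ζ ∈ B.Φ) :
    1 ≤ B.affHeight ζ ∧ B.affHeight ζ ≤ B.cox - 1 := by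
  by_cases h : B.IsPos ζ
  · rw [B.affHeight_of_isPos h]
    exact ⟨B.one_le_height hζ h, B.height_le hζ⟩
  · have hneg := B.isPos_neg_of_not_isPos hζ h
    have h₁ := B.one_le_height (B.neg_mem ζ hζ) hneg
    have h₂ := B.height_le (B.neg_mem ζ hζ)
    rw [← B.affHeight_of_isPos hneg, B.affHeight_neg hζ] at h₁ h₂
    constructor <;> linarith

lemma affHeight_of_mem_extBase {s : V} (hs : s ∈ B.extBase) : B.affHeight s = 1 := by
  rcases B.mem_extBase_iff.mp hs with rfl | hs
  · rw [B.affHeight_neg B.highest_mem, B.affHeight_of_isPos B.isPos_highest, B.height_highest]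
    ring
  · rw [B.affHeight_of_isPos (B.isPos_of_mem_base hs), height,
      sum_congr rfl (B.coord_of_mem_base hs), sum_ite_eq', if_pos hs]

/-- The level `ε` could only change by a multiple of the Coxeter number, which
`affHeight_mem_Icc` forbids. -/
lemma eps_add_of_mem_extBase {ζ s : V} (hζ : ζ ∈ B.Φ) (hs : s ∈ B.extBase)
    (hζs : ζ + s ∈ B.Φ) : B.eps (ζ + s) = B.eps ζ + B.eps s := by
  have key : B.affHeight (ζ + s) =
      B.affHeight ζ + 1 + (B.eps (ζ + s) - B.eps ζ - B.eps s) * B.cox := by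
    have hs₁ := B.affHeight_of_mem_extBase hs
    simp only [affHeight, B.height_add hζ (B.mem_of_mem_extBase hs) hζs] at hs₁ ⊢
    linear_combination hs₁
  obtain ⟨h₁, h₂⟩ := B.affHeight_mem_Icc hζ
  obtain ⟨h₃, h₄⟩ := B.affHeight_mem_Icc hζs
  rcases B.eps_eq_zero_or_eq_one (ζ + s) with e₁ | e₁ <;>
  rcases B.eps_eq_zero_or_eq_one ζ with e₂ | e₂ <;>
  rcases B.eps_eq_zero_or_eq_one s with e₃ | e₃ <;>
  · rw [e₁, e₂, e₃] at key ⊢; omega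

lemma affHeight_add_of_mem_extBase {ζ s : V} (hζ : ζ ∈ B.Φ) (hs : s ∈ B.extBase)
    (hζs : ζ + s ∈ B.Φ) : B.affHeight (ζ + s) = B.affHeight ζ + 1 := by
  have hs₁ := B.affHeight_of_mem_extBase hs
  simp only [affHeight, B.height_add hζ (B.mem_of_mem_extBase hs) hζs,
    B.eps_add_of_mem_extBase hζ hs hζs] at hs₁ ⊢
  linear_combination hs₁

/-- The coefficient at `s ∈ Δ'` of the affine root `(ζ, ε_ζ)` written in the basis `Δ_aff`;
the element `-α_M` of `Δ'` stands for the affine simple root `(-α_M, 1)`. -/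
noncomputable def affCoord (ζ s : V) : ℤ :=
  if s = -B.highest then B.eps ζ else B.coord ζ s + B.eps ζ * B.coord B.highest s

lemma affCoord_neg_highest (ζ : V) : B.affCoord ζ (-B.highest) = B.eps ζ := if_pos rfl

lemma affCoord_of_mem_base (ζ : V) {γ : V} (hγ : γ ∈ B.Δ) :
    B.affCoord ζ γ = B.coord ζ γ + B.eps ζ * B.coord B.highest γ :=
  if_neg fun h : γ = -B.highest => B.neg_highest_not_mem_base (h ▸ hγ)

lemma rle_iff_affCoord_le {α β : V} :
    B.rle α β ↔ ∀ s ∈ B.extBase, B.affCoord α s ≤ B.affCoord β s := by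
  simp only [rle, affLe, B.mem_extBase_iff, forall_eq_or_imp, affCoord_neg_highest]
  refine and_congr_right fun _ => forall₂_congr fun γ hγ => ?_
  rw [B.affCoord_of_mem_base α hγ, B.affCoord_of_mem_base β hγ]

lemma sum_affCoord (ζ : V) : ∑ s ∈ B.extBase, B.affCoord ζ s = B.affHeight ζ := by
  rw [sum_extBase, affCoord_neg_highest, sum_congr rfl fun γ hγ => B.affCoord_of_mem_base ζ hγ,
    sum_add_distrib, ← mul_sum, affHeight, height, cox]
  ring

lemma eq_sum_affCoord_smul {ζ : V} (hζ : ζ ∈ B.Φ) :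
    ζ = ∑ s ∈ B.extBase, (B.affCoord ζ s : ℝ) • s := by
  rw [sum_extBase, affCoord_neg_highest,
    sum_congr rfl fun γ hγ => by rw [B.affCoord_of_mem_base ζ hγ]]
  simp only [Int.cast_add, Int.cast_mul, add_smul, mul_smul, sum_add_distrib, ← smul_sum,
    ← B.coord_spec ζ hζ, ← B.coord_spec B.highest B.highest_mem, smul_neg]
  abel

lemma affCoord_add {ζ ξ : V} (hζ : ζ ∈ B.Φ) (hξ : ξ ∈ B.Φ) (hζξ : ζ + ξ ∈ B.Φ)
    (heps : B.eps (ζ + ξ) = B.eps ζ + B.eps ξ) :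
    ∀ s ∈ B.extBase, B.affCoord (ζ + ξ) s = B.affCoord ζ s + B.affCoord ξ s := by
  intro s hs
  rcases B.mem_extBase_iff.mp hs with rfl | hs
  · simp only [affCoord_neg_highest, heps]
  · simp only [B.affCoord_of_mem_base _ hs, B.coord_add hζ hξ hζξ s hs, heps]
    ring

lemma affCoord_of_mem_extBase {s : V} (hs : s ∈ B.extBase) :
    ∀ u ∈ B.extBase, B.affCoord s u = if u = s then 1 else 0 := by
  intro u hu
  have hsM : B.eps (-B.highest) = 1 := by
    rw [B.eps_neg B.highest_mem, B.eps_of_isPos B.isPos_highest]; rfl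
  rcases B.mem_extBase_iff.mp hs with rfl | hs <;> rcases B.mem_extBase_iff.mp hu with rfl | hu
  · rw [affCoord_neg_highest, hsM, if_pos rfl]
  · rw [B.affCoord_of_mem_base _ hu, hsM, B.coord_neg B.highest_mem u hu,
      if_neg fun h : u = -B.highest => B.neg_highest_not_mem_base (h ▸ hu)]
    ring
  · rw [affCoord_neg_highest, B.eps_of_isPos (B.isPos_of_mem_base hs),
      if_neg fun h : -B.highest = s => B.neg_highest_not_mem_base (h ▸ hs)]
  · rw [B.affCoord_of_mem_base _ hu, B.eps_of_isPos (B.isPos_of_mem_base hs),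
      B.coord_of_mem_base hs u hu]
    ring

lemma affCoord_add_of_mem_extBase {ζ s : V} (hζ : ζ ∈ B.Φ) (hs : s ∈ B.extBase)
    (hζs : ζ + s ∈ B.Φ) :
    ∀ u ∈ B.extBase, B.affCoord (ζ + s) u = B.affCoord ζ u + if u = s then 1 else 0 := by
  intro u hu
  rw [B.affCoord_add hζ (B.mem_of_mem_extBase hs) hζs (B.eps_add_of_mem_extBase hζ hs hζs) u hu,
    B.affCoord_of_mem_extBase hs u hu]

lemma affHeight_le_of_affCoord_le {ζ ξ : V}
    (hle : ∀ u ∈ B.extBase, B.affCoord ζ u ≤ B.affCoord ξ u) :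
    B.affHeight ζ ≤ B.affHeight ξ := by
  rw [← sum_affCoord, ← sum_affCoord]
  exact sum_le_sum hle

lemma affHeight_lt_of_affCoord_lt {ζ ξ : V}
    (hle : ∀ u ∈ B.extBase, B.affCoord ζ u ≤ B.affCoord ξ u)
    {s : V} (hs : s ∈ B.extBase) (hlt : B.affCoord ζ s < B.affCoord ξ s) :
    B.affHeight ζ < B.affHeight ξ := by
  rw [← sum_affCoord, ← sum_affCoord]
  exact sum_lt_sum hle ⟨s, hs, hlt⟩

lemma inner_mul_inner_lt {α γ : V} (hα : α ∈ B.Φ) (hγ : γ ∈ B.Φ) (hne : α ≠ -γ)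
    (hneg : inner ℝ α γ < 0) : inner ℝ α γ * inner ℝ α γ < inner ℝ α α * inner ℝ γ γ := by
  have hα₀ : 0 < ‖α‖ := norm_pos_iff.mpr (ne_of_mem_of_not_mem hα B.zero_not_mem)
  have hγ₀ : 0 < ‖γ‖ := norm_pos_iff.mpr (ne_of_mem_of_not_mem hγ B.zero_not_mem)
  have hcs : inner ℝ α (-γ) < ‖α‖ * ‖-γ‖ := by
    refine inner_lt_norm_mul_iff_real.mpr fun h => ?_
    have hprop : (-(‖α‖ / ‖γ‖)) • γ = α := by
      rw [norm_neg, smul_neg] at h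
      apply smul_right_injective V hγ₀.ne'
      dsimp only
      rw [h, smul_smul, mul_neg, mul_div_cancel₀ _ hγ₀.ne', neg_smul]
    rcases B.reduced γ hγ _ (hprop ▸ hα) with h1 | h1
    · linarith [div_pos hα₀ hγ₀]
    · exact hne (by rw [← hprop, h1, neg_one_smul])
  rw [inner_neg_right, norm_neg] at hcs
  rw [real_inner_self_eq_norm_mul_norm, real_inner_self_eq_norm_mul_norm,
    mul_mul_mul_comm, ← neg_mul_neg]
  exact mul_self_lt_mul_self (by linarith) hcs

/-- Two roots at an obtuse angle have Cartan integers of product `< 4`, so one of them is `-1`,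
and the corresponding reflection is `α + γ`. -/
lemma add_mem_of_inner_neg {α γ : V} (hα : α ∈ B.Φ) (hγ : γ ∈ B.Φ) (hne : α ≠ -γ)
    (hneg : inner ℝ α γ < 0) : α + γ ∈ B.Φ := by
  have hαα := real_inner_self_pos.mpr (ne_of_mem_of_not_mem hα B.zero_not_mem)
  have hγγ := real_inner_self_pos.mpr (ne_of_mem_of_not_mem hγ B.zero_not_mem)
  have hrefl : ∀ {x y : V}, x ∈ B.Φ → y ∈ B.Φ → 2 * inner ℝ x y / inner ℝ y y = -1 →
      x + y ∈ B.Φ := fun {x y} hx hy h => by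
    have := B.reflect_mem y hy x hx
    rwa [h, neg_one_smul, sub_neg_eq_add] at this
  obtain ⟨n, hn⟩ := B.crystallographic γ hγ α hα
  obtain ⟨m, hm⟩ := B.crystallographic α hα γ hγ
  rw [real_inner_comm] at hn
  have hn₀ : n < 0 := by
    have : (n : ℝ) < 0 := hn ▸ div_neg_of_neg_of_pos (by linarith) hγγ
    exact_mod_cast this
  have hm₀ : m < 0 := by
    have : (m : ℝ) < 0 := hm ▸ div_neg_of_neg_of_pos (by linarith) hαα
    exact_mod_cast this
  have hnm : n * m < 4 := by
    have : (n : ℝ) * m < 4 := by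
      rw [← hn, ← hm, div_mul_div_comm, div_lt_iff₀ (by positivity)]
      nlinarith [B.inner_mul_inner_lt hα hγ hne hneg]
    exact_mod_cast this
  have hcases : n = -1 ∨ m = -1 := by
    by_contra! h
    nlinarith [(by omega : n ≤ -2), (by omega : m ≤ -2)]
  rcases hcases with rfl | rfl
  · exact hrefl hα hγ (by rw [hn]; norm_num)
  · rw [add_comm]
    exact hrefl hγ hα (by rw [real_inner_comm, hm]; norm_num)

lemma exists_mem_extBase_affCoord_lt_inner_pos {α β : V} (hα : α ∈ B.Φ) (hβ : β ∈ B.Φ)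
    (hle : ∀ u ∈ B.extBase, B.affCoord α u ≤ B.affCoord β u) (hne : α ≠ β) :
    ∃ s ∈ B.extBase, B.affCoord α s < B.affCoord β s ∧ 0 < inner ℝ (β - α) s := by
  have hd : β - α = ∑ s ∈ B.extBase, ((B.affCoord β s - B.affCoord α s : ℤ) : ℝ) • s := by
    conv_lhs => rw [B.eq_sum_affCoord_smul hβ, B.eq_sum_affCoord_smul hα]
    simp only [← sum_sub_distrib, Int.cast_sub, sub_smul]
  have hpos : ∑ _s ∈ B.extBase, (0 : ℝ) <
      ∑ s ∈ B.extBase, ((B.affCoord β s - B.affCoord α s : ℤ) : ℝ) * inner ℝ (β - α) s := by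
    simp_rw [sum_const_zero, ← real_inner_smul_right, ← inner_sum, ← hd]
    exact real_inner_self_pos.mpr (sub_ne_zero.mpr hne.symm)
  obtain ⟨s, hs, hprod⟩ := exists_lt_of_sum_lt hpos
  have hd₀ : (0 : ℝ) ≤ ((B.affCoord β s - B.affCoord α s : ℤ) : ℝ) := by
    exact_mod_cast sub_nonneg.mpr (hle s hs)
  obtain ⟨hd₁, hip⟩ := (pos_and_pos_or_neg_and_neg_of_mul_pos hprod).resolve_right
    fun h => h.1.not_ge hd₀
  exact ⟨s, hs, sub_pos.mp (by exact_mod_cast hd₁), hip⟩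

lemma affCoord_add_ite_le {ζ ξ s : V} (hle : ∀ u ∈ B.extBase, B.affCoord ζ u ≤ B.affCoord ξ u)
    (hlt : B.affCoord ζ s < B.affCoord ξ s) :
    ∀ u ∈ B.extBase, B.affCoord ζ u + (if u = s then 1 else 0) ≤ B.affCoord ξ u := by
  intro u hu
  split_ifs with hus
  · exact hus ▸ hlt
  · simpa using hle u hu

/-- The cases `α = -s` and `β = s` are excluded by `affHeight_mem_Icc`: `-s` has the largest
and `s` the smallest possible affine height. -/
lemma exists_step {α β : V} (hα : α ∈ B.Φ) (hβ : β ∈ B.Φ)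
    (hle : ∀ u ∈ B.extBase, B.affCoord α u ≤ B.affCoord β u) (hne : α ≠ β) :
    ∃ s ∈ B.extBase,
      (α + s ∈ B.Φ ∧ ∀ u ∈ B.extBase, B.affCoord (α + s) u ≤ B.affCoord β u) ∨
      (β - s ∈ B.Φ ∧ ∀ u ∈ B.extBase, B.affCoord α u ≤ B.affCoord (β - s) u) := by
  obtain ⟨s, hs, hlt, hip⟩ := B.exists_mem_extBase_affCoord_lt_inner_pos hα hβ hle hne
  have hsΦ := B.mem_of_mem_extBase hs
  have hheight := B.affHeight_lt_of_affCoord_lt hle hs hlt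
  have hstep := B.affCoord_add_ite_le hle hlt
  rw [inner_sub_left, sub_pos] at hip
  rcases lt_or_ge (inner ℝ α s) 0 with hαs | hαs
  · have hαs' : α ≠ -s := by
      rintro rfl
      rw [B.affHeight_neg hsΦ, B.affHeight_of_mem_extBase hs] at hheight
      linarith [(B.affHeight_mem_Icc hβ).2]
    have hmem := B.add_mem_of_inner_neg hα hsΦ hαs' hαs
    refine ⟨s, hs, .inl ⟨hmem, fun u hu => ?_⟩⟩
    rw [B.affCoord_add_of_mem_extBase hα hs hmem u hu]
    exact hstep u hu
  · have hβs : β ≠ s := by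
      rintro rfl
      rw [B.affHeight_of_mem_extBase hs] at hheight
      linarith [(B.affHeight_mem_Icc hα).1]
    have hmem : β - s ∈ B.Φ := by
      rw [sub_eq_add_neg]
      refine B.add_mem_of_inner_neg hβ (B.neg_mem s hsΦ) (by rwa [neg_neg]) ?_
      rw [inner_neg_right]
      linarith
    refine ⟨s, hs, .inr ⟨hmem, fun u hu => ?_⟩⟩
    have hβ' := B.affCoord_add_of_mem_extBase hmem hs (by rwa [sub_add_cancel]) u hu
    rw [sub_add_cancel] at hβ'
    linarith [hstep u hu]

theorem reflTransGen_of_affCoord_le {α β : V} (hα : α ∈ B.Φ) (hβ : β ∈ B.Φ)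
    (hle : ∀ u ∈ B.extBase, B.affCoord α u ≤ B.affCoord β u) :
    Relation.ReflTransGen (fun x y => y ∈ B.Φ ∧ y - x ∈ B.extBase) α β := by
  by_cases hne : α = β
  · exact hne ▸ .refl
  obtain ⟨s, hs, ⟨hmem, hle'⟩ | ⟨hmem, hle'⟩⟩ := B.exists_step hα hβ hle hne
  · exact .head ⟨hmem, by rwa [add_sub_cancel_left]⟩ (reflTransGen_of_affCoord_le hmem hβ hle')
  · exact .tail (reflTransGen_of_affCoord_le hα hmem hle') ⟨hβ, by rwa [sub_sub_cancel]⟩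
termination_by (B.affHeight β - B.affHeight α).toNat
decreasing_by
  · have := B.affHeight_add_of_mem_extBase hα hs hmem
    have := B.affHeight_le_of_affCoord_le hle'
    omega
  · have := B.affHeight_add_of_mem_extBase hmem hs (by rwa [sub_add_cancel])
    rw [sub_add_cancel] at this
    have := B.affHeight_le_of_affCoord_le hle'
    omega

theorem affCoord_le_of_reflTransGen {α β : V} (hα : α ∈ B.Φ)
    (h : Relation.ReflTransGen (fun x y => y ∈ B.Φ ∧ y - x ∈ B.extBase) α β) :
    ∀ u ∈ B.extBase, B.affCoord α u ≤ B.affCoord β u := by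
  induction h using Relation.ReflTransGen.head_induction_on with
  | refl => exact fun _ _ => le_rfl
  | @head ζ ξ hstep _ ih =>
    intro u hu
    have hξ : ζ + (ξ - ζ) ∈ B.Φ := by rw [add_sub_cancel]; exact hstep.1
    have := B.affCoord_add_of_mem_extBase hα hstep.2 hξ u hu
    rw [add_sub_cancel] at this
    linarith [ih hstep.1 u hu, show (0 : ℤ) ≤ if u = ξ - ζ then 1 else 0 by split_ifs <;> simp]

end BasedRootSystem

/-- `α ≤ β` in the partial order induced from the affine root system
iff one can pass from `α` to `β` by successively adding elements of `Δ'`, staying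
inside `Φ` at each step. -/
theorem stmt3 {V : Type*} [NormedAddCommGroup V] [InnerProductSpace ℝ V]
    (B : BasedRootSystem V) (α β : V) (hα : α ∈ B.Φ) (hβ : β ∈ B.Φ) :
    B.rle α β ↔ ∃ (t : ℕ) (g : ℕ → V),
      (∀ i < t, g i ∈ B.extBase) ∧
      (∀ i ≤ t, α + ∑ j ∈ Finset.range i, g j ∈ B.Φ) ∧
      α + ∑ j ∈ Finset.range t, g j = β := by
  rw [B.rle_iff_affCoord_le]
  have hchain := Relation.reflTransGen_iff_exists_partial_sums
    (S := (B.extBase : Set V)) (P := (B.Φ : Set V)) (b := β) hα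
  exact ⟨fun h => hchain.mp (B.reflTransGen_of_affCoord_le hα hβ h),
    fun h => B.affCoord_le_of_reflTransGen hα (hchain.mpr h)⟩
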